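/- arXiv:1403.5533 — 4 statements merged into one kernel-verified Lean document; each statement's English description precedes it below -/
import Mathlib

section
/- For all real x with 0 ≤ x ≤ π/2, if sin²(x) ≤ ε then sin²(x) ≥ x²(1 - (π²/12)ε). -/
/-!
Squaring the Taylor bound `x - x³/6 ≤ sin x` (whose left side is nonnegative for `x² ≤ 6`) gives
`sin² x ≥ x² - x⁴/3`, and Jordan's inequality `2x/π ≤ sin x` gives `x² ≤ (π²/4) sin² x ≤ (π²/4) ε`,
so `x⁴/3 ≤ x² (π²/12) ε`.
-/

open Real

lemma sq_sub_pow_four_div_three_le_sin_sq {x : ℝ} (hx : 0 ≤ x) (hx6 : x ^ 2 ≤ 6) :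
    x ^ 2 - x ^ 4 / 3 ≤ sin x ^ 2 := by
  have htaylor_nonneg : 0 ≤ x - x ^ 3 / 6 := by nlinarith
  calc x ^ 2 - x ^ 4 / 3 ≤ (x - x ^ 3 / 6) ^ 2 := by nlinarith [sq_nonneg (x ^ 3)]
    _ ≤ sin x ^ 2 := pow_le_pow_left₀ htaylor_nonneg (sin_ge_sub_cube hx) 2

lemma sq_le_pi_sq_div_four_mul_sin_sq {x : ℝ} (hx0 : 0 ≤ x) (hx1 : x ≤ π / 2) :
    x ^ 2 ≤ π ^ 2 / 4 * sin x ^ 2 := by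
  have hjordan : 2 / π * x ≤ sin x := mul_le_sin hx0 hx1
  calc x ^ 2 = π ^ 2 / 4 * (2 / π * x) ^ 2 := by field_simp; ring
    _ ≤ π ^ 2 / 4 * sin x ^ 2 := by gcongr

theorem stmt_0 (x ε : ℝ) (hx0 : 0 ≤ x) (hx1 : x ≤ π / 2)
    (h : Real.sin x ^ 2 ≤ ε) :
    Real.sin x ^ 2 ≥ x ^ 2 * (1 - (π ^ 2 / 12) * ε) := by
  have hx6 : x ^ 2 ≤ 6 := by nlinarith [pi_lt_d2]
  have hx_sq : x ^ 2 / 3 ≤ π ^ 2 / 12 * ε := by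
    nlinarith [sq_le_pi_sq_div_four_mul_sin_sq hx0 hx1, sq_nonneg π]
  calc x ^ 2 * (1 - π ^ 2 / 12 * ε) ≤ x ^ 2 * (1 - x ^ 2 / 3) := by gcongr
    _ = x ^ 2 - x ^ 4 / 3 := by ring
    _ ≤ sin x ^ 2 := sq_sub_pow_four_div_three_le_sin_sq hx0 hx6
end

section
/- Let H be a self-adjoint operator on a finite-dimensional inner product space 𝓗 and 𝓗₀ a subspace of dimension L'. Then for each 1 ≤ k ≤ L', the k-th smallest eigenvalue E_k of H satisfies E_k ≤ max over (k-1)-dimensional subspaces S of 𝓗₀ of min over unit vectors φ ∈ 𝓗₀ with φ ⊥ S of ⟨φ, Hφ⟩. -/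
/-!
Let `V` be spanned by the eigenvectors of the `k - 1` smallest eigenvalues. Projecting `V`
orthogonally onto `H₀` and enlarging the image gives a `(k - 1)`-dimensional `S ≤ H₀` such that
every `φ ∈ H₀` orthogonal to `S` is orthogonal to `V`. In the eigenbasis `⟪φ, T φ⟫ = ∑ Eᵢ cᵢ²`,
so on `Vᗮ` it is at least `E (k - 1) * ‖φ‖ ^ 2`; and as `finrank S < finrank H₀`, the
infimum for this `S` runs over a nonempty set of unit vectors.
-/

open Module

open scoped RealInnerProductSpace

-- `⨅` on `ℝ` is `0` for empty or unbounded-below families.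
lemma Real.iInf_le_of_forall_le {ι : Sort*} {f : ι → ℝ} {a : ℝ} (hf : ∀ i, f i ≤ a)
    (ha : 0 ≤ a) : ⨅ i, f i ≤ a := by
  by_cases hbdd : BddBelow (Set.range f)
  · cases isEmpty_or_nonempty ι with
    | inl _ => simpa using ha
    | inr hι => exact ciInf_le_of_le hbdd hι.some (hf _)
  · rwa [Real.iInf_of_not_bddBelow hbdd]

theorem Submodule.exists_finrank_eq_of_le {K V : Type*} [DivisionRing K] [AddCommGroup V]
    [Module K V] [FiniteDimensional K V] {S₀ H₀ : Submodule K V} (hS₀ : S₀ ≤ H₀) {d : ℕ}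
    (hd₀ : finrank K S₀ ≤ d) (hd : d ≤ finrank K H₀) :
    ∃ S, S₀ ≤ S ∧ S ≤ H₀ ∧ finrank K S = d := by
  induction d, hd₀ using Nat.le_induction with
  | base => exact ⟨S₀, le_rfl, hS₀, rfl⟩
  | succ d _ ih =>
    obtain ⟨S, hS₀S, hSH₀, rfl⟩ := ih (by omega)
    obtain ⟨x, hxH₀, hxS⟩ := SetLike.exists_of_lt <|
      hSH₀.lt_of_ne fun h => by rw [h] at hd; omega
    refine ⟨S ⊔ span K {x}, le_sup_of_le_left hS₀S, sup_le hSH₀ ?_,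
      finrank_sup_span_singleton hxS⟩
    exact (span_singleton_le_iff_mem x H₀).2 hxH₀

section

variable {𝕜 E : Type*} [RCLike 𝕜] [NormedAddCommGroup E] [InnerProductSpace 𝕜 E]
  [FiniteDimensional 𝕜 E]

theorem Submodule.exists_finrank_eq_inf_orthogonal_le (H₀ V : Submodule 𝕜 E) {d : ℕ}
    (hV : finrank 𝕜 V ≤ d) (hd : d ≤ finrank 𝕜 H₀) :
    ∃ S ≤ H₀, finrank 𝕜 S = d ∧ H₀ ⊓ Sᗮ ≤ Vᗮ := by
  set P : E →ₗ[𝕜] E := (H₀.starProjection : E →ₗ[𝕜] E)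
  have hPV : V.map P ≤ H₀ := by
    rintro _ ⟨v, -, rfl⟩
    exact H₀.starProjection_apply_mem v
  obtain ⟨S, hPVS, hSH₀, hSd⟩ :=
    exists_finrank_eq_of_le hPV ((finrank_map_le _ V).trans hV) hd
  refine ⟨S, hSH₀, hSd, fun φ ⟨hφH₀, hφS⟩ => (mem_orthogonal' V φ).2 fun v hv => ?_⟩
  rw [← H₀.starProjection_eq_self_iff.2 hφH₀, inner_starProjection_left_eq_right]
  exact (mem_orthogonal' S φ).1 hφS _ (hPVS ⟨v, hv, rfl⟩)

theorem Submodule.exists_norm_eq_one_mem_inf_orthogonal {S H₀ : Submodule 𝕜 E} (hSH₀ : S ≤ H₀)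
    (hS : finrank 𝕜 S < finrank 𝕜 H₀) : ∃ φ ∈ H₀ ⊓ Sᗮ, ‖φ‖ = 1 := by
  have hpos : 0 < finrank 𝕜 ↥(H₀ ⊓ Sᗮ) := by
    have := finrank_add_inf_finrank_orthogonal hSH₀
    rw [inf_comm] at this
    omega
  obtain ⟨φ, hφ, hφ0⟩ := Submodule.exists_mem_ne_zero_of_ne_bot <|
    Submodule.one_le_finrank_iff.1 hpos
  exact ⟨(‖φ‖⁻¹ : 𝕜) • φ, smul_mem _ _ hφ, norm_smul_inv_norm hφ0⟩

end

section

variable {E : Type*} [NormedAddCommGroup E] [InnerProductSpace ℝ E]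

theorem ContinuousLinearMap.inner_map_self_le (T : E →L[ℝ] E) (φ : E) :
    ⟪φ, T φ⟫ ≤ ‖T‖ * ‖φ‖ ^ 2 :=
  calc ⟪φ, T φ⟫ ≤ ‖φ‖ * ‖T φ‖ := real_inner_le_norm _ _
    _ ≤ ‖φ‖ * (‖T‖ * ‖φ‖) := by gcongr; exact T.le_opNorm φ
    _ = ‖T‖ * ‖φ‖ ^ 2 := by ring

theorem OrthonormalBasis.mul_norm_sq_le_inner_map_self {ι : Type*} [Fintype ι]
    (b : OrthonormalBasis ι ℝ E) {T : E →ₗ[ℝ] E} {μ : ι → ℝ} (hb : ∀ i, T (b i) = μ i • b i)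
    {c : ℝ} {φ : E} (hφ : ∀ i, μ i < c → ⟪b i, φ⟫ = 0) : c * ‖φ‖ ^ 2 ≤ ⟪φ, T φ⟫ := by
  have hTφ : T φ = ∑ i, (μ i * ⟪b i, φ⟫) • b i := by
    conv_lhs => rw [← b.sum_repr' φ]
    simp only [map_sum, map_smul, hb, smul_smul, mul_comm]
  have hquad : ⟪φ, T φ⟫ = ∑ i, μ i * ⟪b i, φ⟫ ^ 2 := by
    simp only [hTφ, inner_sum, real_inner_smul_right, real_inner_comm φ]
    exact Finset.sum_congr rfl fun i _ => by ring
  rw [hquad, ← b.sum_sq_inner_right, Finset.mul_sum]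
  refine Finset.sum_le_sum fun i _ => ?_
  rcases lt_or_ge (μ i) c with hμ | hμ
  · simp [hφ i hμ]
  · exact mul_le_mul_of_nonneg_right hμ (sq_nonneg _)

end

theorem stmt_6_general {H : Type*} [NormedAddCommGroup H] [InnerProductSpace ℝ H]
    [FiniteDimensional ℝ H]
    (T : H →ₗ[ℝ] H)
    (E : ℕ → ℝ) (hE : Monotone E)
    (hbasis : ∃ b : OrthonormalBasis (Fin (finrank ℝ H)) ℝ H,
      ∀ i : Fin (finrank ℝ H), T (b i) = E (i : ℕ) • b i)
    (H₀ : Submodule ℝ H) (L' : ℕ) (hL' : finrank ℝ H₀ = L')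
    (k : ℕ) (hk1 : 1 ≤ k) (hk2 : k ≤ L') :
    E (k - 1) ≤
      ⨆ S : {S : Submodule ℝ H // S ≤ H₀ ∧ finrank ℝ S = k - 1},
        ⨅ φ : {φ : H // φ ∈ H₀ ∧ ‖φ‖ = 1 ∧ ∀ v ∈ S.1, inner ℝ φ v = (0 : ℝ)},
          (inner ℝ (φ : H) (T φ) : ℝ) := by
  classical
  obtain ⟨b, hb⟩ := hbasis
  have hk : k - 1 < finrank ℝ H := by have := H₀.finrank_le; omega
  let m : Fin (finrank ℝ H) := ⟨k - 1, hk⟩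
  let V := Submodule.span ℝ (((Finset.Iio m).image b : Finset H) : Set H)
  have hV : finrank ℝ V ≤ k - 1 :=
    (finrank_span_finset_le_card _).trans (Finset.card_image_le.trans (Fin.card_Iio m).le)
  obtain ⟨S, hSH₀, hSdim, hSV⟩ := H₀.exists_finrank_eq_inf_orthogonal_le V hV (by omega)
  have hmin : ∀ φ ∈ H₀ ⊓ Sᗮ, ‖φ‖ = 1 → E (k - 1) ≤ ⟪φ, T φ⟫ := by
    intro φ hφ hφ1
    have hφV := (Submodule.mem_orthogonal V φ).1 (hSV hφ)
    simpa [hφ1] using b.mul_norm_sq_le_inner_map_self hb (c := E m) fun i hi =>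
      hφV _ (Submodule.subset_span (by simpa using ⟨i, hE.reflect_lt hi, rfl⟩))
  have hbdd : BddAbove (Set.range fun S : {S : Submodule ℝ H // S ≤ H₀ ∧ finrank ℝ S = k - 1} =>
      ⨅ φ : {φ : H // φ ∈ H₀ ∧ ‖φ‖ = 1 ∧ ∀ v ∈ S.1, inner ℝ φ v = (0 : ℝ)}, ⟪(φ : H), T φ⟫) :=
    ⟨_, Set.forall_mem_range.2 fun _ => Real.iInf_le_of_forall_le
      (fun φ => by simpa [φ.2.2.1] using T.toContinuousLinearMap.inner_map_self_le φ)
      (norm_nonneg _)⟩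
  obtain ⟨φ₀, hφ₀, hφ₀1⟩ := Submodule.exists_norm_eq_one_mem_inf_orthogonal hSH₀ (by omega)
  have : Nonempty {φ : H // φ ∈ H₀ ∧ ‖φ‖ = 1 ∧ ∀ v ∈ S, inner ℝ φ v = (0 : ℝ)} :=
    ⟨φ₀, hφ₀.1, hφ₀1, (Submodule.mem_orthogonal' S φ₀).1 hφ₀.2⟩
  refine le_ciSup_of_le hbdd ⟨S, hSH₀, hSdim⟩ (le_ciInf fun φ => ?_)
  exact hmin φ ⟨φ.2.1, (Submodule.mem_orthogonal' S φ).2 φ.2.2.2⟩ φ.2.2.1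

theorem stmt_6 {H : Type*} [NormedAddCommGroup H] [InnerProductSpace ℝ H]
    [FiniteDimensional ℝ H]
    (T : H →ₗ[ℝ] H) (hT : T.IsSymmetric)
    (E : ℕ → ℝ) (hE : Monotone E)
    (hbasis : ∃ b : OrthonormalBasis (Fin (finrank ℝ H)) ℝ H,
      ∀ i : Fin (finrank ℝ H), T (b i) = E (i : ℕ) • b i)
    (H₀ : Submodule ℝ H) (L' : ℕ) (hL' : finrank ℝ H₀ = L')
    (k : ℕ) (hk1 : 1 ≤ k) (hk2 : k ≤ L') :
    E (k - 1) ≤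
      ⨆ S : {S : Submodule ℝ H // S ≤ H₀ ∧ finrank ℝ S = k - 1},
        ⨅ φ : {φ : H // φ ∈ H₀ ∧ ‖φ‖ = 1 ∧ ∀ v ∈ S.1, inner ℝ φ v = (0 : ℝ)},
          (inner ℝ (φ : H) (T φ) : ℝ) :=
  stmt_6_general T E hE hbasis H₀ L' hL' k hk1 hk2
end

section
/- For 0 < ρ < 1 and 0 ≤ t ≤ 1, the Bernoulli moment generating function satisfies ρe^t + (1 - ρ) ≤ exp(ρ(t + (e/2)t²)). -/
/-! The Bernoulli moment generating function is `1 + ρ (eᵗ - 1)`; bound `eᵗ - 1` by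
`t + t² ≤ t + (e/2) t²` on `[-1, 1]` and finish with `1 + x ≤ eˣ`. -/

open Real

lemma Real.exp_le_one_add_add_sq {x : ℝ} (hx : |x| ≤ 1) : exp x ≤ 1 + x + x ^ 2 := by
  linarith [(abs_le.mp (abs_exp_sub_one_sub_id_le hx)).2]

lemma Real.mul_exp_add_one_sub_le_exp_mul {p x a : ℝ} (hp : 0 ≤ p) (h : exp x ≤ 1 + a) :
    p * exp x + (1 - p) ≤ exp (p * a) :=
  calc p * exp x + (1 - p) = 1 + p * (exp x - 1) := by ring
    _ ≤ 1 + p * a := by gcongr; linarith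
    _ ≤ exp (p * a) := by linarith [add_one_le_exp (p * a)]

theorem stmt_9_general (ρ t : ℝ) (hρ0 : 0 < ρ) (ht0 : 0 ≤ t) (ht1 : t ≤ 1) :
    ρ * Real.exp t + (1 - ρ) ≤ Real.exp (ρ * (t + (Real.exp 1 / 2) * t ^ 2)) := by
  refine mul_exp_add_one_sub_le_exp_mul hρ0.le ?_
  have hsq : exp t ≤ 1 + t + t ^ 2 := exp_le_one_add_add_sq (abs_le.mpr ⟨by linarith, ht1⟩)
  nlinarith [exp_one_gt_two, sq_nonneg t]

theorem stmt_9 (ρ t : ℝ) (hρ0 : 0 < ρ) (hρ1 : ρ < 1) (ht0 : 0 ≤ t) (ht1 : t ≤ 1) :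
    ρ * Real.exp t + (1 - ρ) ≤ Real.exp (ρ * (t + (Real.exp 1 / 2) * t ^ 2)) :=
  stmt_9_general ρ t hρ0 ht0 ht1
end

section
/- Let f(x) = (c/√(ℓ+1))·sin(απ(x-x₀)/(ℓ+1) + t) with c ≥ 1, t ∈ [-π/2, π/2], boundary values δ_L = f(x₀), δ_R = f(x₀+ℓ+1), and δ = max{|δ_L|, |δ_R|}. If the fractional part {α} satisfies {α}π + t > π/2, then α ≥ ⌊α⌋ + 1 - δ√(ℓ+1). -/
/-!
Write `β = {α}`, so the claim is `1 - β ≤ δ √(ℓ+1) = c · max |sin t| |sin (απ + t)|`, and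
`|sin (απ + t)| = |sin (βπ + t)|`. Since `sin` lies above the tent function on `[0, π]`
(Jordan's inequality), `sin x ≥ 1 - β` on `[(1 - β)π/2, π - (1 - β)π/2]`; as `t ≤ π/2 < βπ + t`
and the two points are `βπ` apart, one of them lies in this interval.
-/

open Real

theorem le_sin_of_mul_pi_div_two_le {s x : ℝ} (hs : 0 ≤ s) (hx₁ : s * (π / 2) ≤ x)
    (hx₂ : x ≤ π - s * (π / 2)) : s ≤ sin x := by
  have jordan : ∀ y, s * (π / 2) ≤ y → y ≤ π / 2 → s ≤ sin y := fun y hy₁ hy₂ => by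
    have hy₀ : 0 ≤ y := le_trans (by positivity) hy₁
    have : s ≤ 2 / π * y := by
      rw [div_mul_eq_mul_div, le_div_iff₀ pi_pos]
      linarith
    exact this.trans (mul_le_sin hy₀ hy₂)
  rcases le_total x (π / 2) with hx | hx
  · exact jordan x hx₁ hx
  · rw [← sin_pi_sub]
    exact jordan (π - x) (by linarith) (by linarith)

theorem one_sub_le_max_sin {β t : ℝ} (hβ : β ≤ 1) (ht : t ≤ π / 2)
    (hβt : π / 2 < β * π + t) : 1 - β ≤ max (sin t) (sin (β * π + t)) := by
  have hπ := pi_pos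
  rcases le_total ((1 - β) * (π / 2)) t with h | h
  · exact le_max_of_le_left <| le_sin_of_mul_pi_div_two_le (by linarith) h (by nlinarith)
  · exact le_max_of_le_right <| le_sin_of_mul_pi_div_two_le (by linarith) (by nlinarith)
      (by linarith)

theorem abs_sin_mul_pi_add_eq_fract (α t : ℝ) :
    |sin (α * π + t)| = |sin (Int.fract α * π + t)| := by
  have : α * π + t = Int.fract α * π + t + ⌊α⌋ * π := by
    conv_lhs => rw [← Int.floor_add_fract α]
    ring
  rw [this, sin_add_int_mul_pi, abs_mul, abs_zpow, abs_neg, abs_one, one_zpow, one_mul]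

theorem stmt_17_general (ℓ : ℕ) (α t c : ℝ)
    (hc : 1 ≤ c) (ht2 : t ≤ π / 2)
    (δL δR δ : ℝ)
    (hδL : δL = c / Real.sqrt ((ℓ : ℝ) + 1) * Real.sin t)
    (hδR : δR = c / Real.sqrt ((ℓ : ℝ) + 1) * Real.sin (α * π + t))
    (hδ : δ = max |δL| |δR|)
    (hfrac : Int.fract α * π + t > π / 2) :
    α ≥ (⌊α⌋ : ℝ) + 1 - δ * Real.sqrt ((ℓ : ℝ) + 1) := by
  have hsqrt : 0 < √((ℓ : ℝ) + 1) := by positivity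
  have hδ_eq : δ * √((ℓ : ℝ) + 1) = c * max |sin t| |sin (α * π + t)| := by
    rw [hδ, hδL, hδR, abs_mul, abs_mul, ← mul_max_of_nonneg _ _ (abs_nonneg _),
      abs_div, abs_of_pos hsqrt, abs_of_pos (by linarith : 0 < c)]
    field_simp
  have hmax : 1 - Int.fract α ≤ max |sin t| |sin (α * π + t)| := by
    rw [abs_sin_mul_pi_add_eq_fract]
    exact (one_sub_le_max_sin (Int.fract_lt_one α).le ht2 hfrac).trans
      (max_le_max (le_abs_self _) (le_abs_self _))
  have hcmax : max |sin t| |sin (α * π + t)| ≤ c * max |sin t| |sin (α * π + t)| :=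
    le_mul_of_one_le_left (le_max_of_le_left (abs_nonneg _)) hc
  have hsplit := Int.floor_add_fract α
  linarith

theorem stmt_17 (ℓ : ℕ) (hℓ : 1 ≤ ℓ) (x₀ : ℤ) (α t c : ℝ)
    (hα : 0 ≤ α) (hc : 1 ≤ c) (ht1 : -(π / 2) ≤ t) (ht2 : t ≤ π / 2)
    (δL δR δ : ℝ)
    (hδL : δL = c / Real.sqrt ((ℓ : ℝ) + 1) * Real.sin t)
    (hδR : δR = c / Real.sqrt ((ℓ : ℝ) + 1) * Real.sin (α * π + t))
    (hδ : δ = max |δL| |δR|)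
    (hfrac : Int.fract α * π + t > π / 2) :
    α ≥ (⌊α⌋ : ℝ) + 1 - δ * Real.sqrt ((ℓ : ℝ) + 1) :=
  stmt_17_general ℓ α t c hc ht2 δL δR δ hδL hδR hδ hfrac
end
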